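/- arXiv:1406.3722 — 3 statements merged into one kernel-verified Lean document; each statement's English description precedes it below -/
import Mathlib

section
/- Let α, β > 0 be real numbers and a ∈ ℝ. For every real s > 0 with s^α > |a|, the Laplace transform identity ∫₀^∞ e^{-st} t^{β-1} E_{α,β}(a t^α) dt = s^{α-β} / (s^α - a) holds, where E_{α,β}(z) = ∑_{k=0}^∞ z^k / Γ(αk + β). -/
open MeasureTheory Real

/-- The real two-parameter Mittag-Leffler function `E_{α,β}(x) = ∑ x^k / Γ(αk+β)`. -/
noncomputable def mittagLefflerReal (α β : ℝ) (x : ℝ) : ℝ :=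
  ∑' k : ℕ, x ^ k / Real.Gamma (α * k + β)

/-!
Expanding `E_{α,β}` termwise, the `k`-th term of the integrand is `a ^ k` times the normalized
Gamma kernel `t ^ (αk + β - 1) e^{-st} / Γ(αk + β)`, a nonnegative function with integral
`s ^ (-(αk + β))`. Since `|a| < s ^ α`, the series `∑ |a| ^ k s ^ (-(αk + β))` is a convergent
geometric series, which lets the sum and the integral be interchanged; the signed geometric
series then sums to `s ^ (α - β) / (s ^ α - a)`.
-/

open Set

theorem integral_tsum_mul_of_nonneg {X ι : Type*} [MeasurableSpace X] [Countable ι]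
    {μ : Measure X} {f : ι → X → ℝ} {c : ι → ℝ} (hf_nonneg : ∀ i, 0 ≤ᵐ[μ] f i)
    (hf_int : ∀ i, Integrable (f i) μ) (hsum : Summable fun i ↦ |c i| * ∫ x, f i x ∂μ) :
    ∫ x, ∑' i, c i * f i x ∂μ = ∑' i, c i * ∫ x, f i x ∂μ := by
  have hnorm : ∀ i, ∫ x, ‖c i * f i x‖ ∂μ = |c i| * ∫ x, f i x ∂μ := fun i ↦ by
    rw [← integral_const_mul]
    refine integral_congr_ae ((hf_nonneg i).mono fun x (hx : 0 ≤ f i x) ↦ ?_)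
    simp only [norm_mul, Real.norm_eq_abs, abs_of_nonneg hx]
  simp_rw [← integral_const_mul]
  exact (integral_tsum_of_summable_integral_norm (fun i ↦ (hf_int i).const_mul (c i))
    (by simpa only [hnorm] using hsum)).symm

theorem integrableOn_rpow_sub_one_mul_exp_neg_mul {p s : ℝ} (hp : 0 < p) (hs : 0 < s) :
    IntegrableOn (fun t : ℝ ↦ t ^ (p - 1) * exp (-(s * t))) (Ioi 0) := by
  simpa only [rpow_one, neg_mul] using
    integrableOn_rpow_mul_exp_neg_mul_rpow (by linarith : -1 < p - 1) one_pos hs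

theorem integral_rpow_sub_one_mul_exp_neg_mul_div_Gamma {p s : ℝ} (hp : 0 < p) (hs : 0 < s) :
    ∫ t in Ioi 0, t ^ (p - 1) * exp (-(s * t)) / Gamma p = (1 / s) ^ p := by
  rw [integral_div, integral_rpow_mul_exp_neg_mul_Ioi hp hs,
    mul_div_cancel_right₀ _ (Gamma_pos_of_pos hp).ne']

theorem exp_mul_rpow_mul_mittagLefflerReal_eq_tsum (α β a s : ℝ) {t : ℝ} (ht : 0 < t) :
    exp (-s * t) * t ^ (β - 1) * mittagLefflerReal α β (a * t ^ α) =
      ∑' k : ℕ, a ^ k * (t ^ (α * k + β - 1) * exp (-(s * t)) / Gamma (α * k + β)) := by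
  rw [mittagLefflerReal, ← tsum_mul_left]
  congr 1 with k
  rw [mul_pow, ← rpow_mul_natCast ht.le, add_sub_assoc, rpow_add ht, neg_mul]
  ring

theorem hasSum_pow_mul_one_div_rpow {α β a s : ℝ} (hs : 0 < s) (hsa : |a| < s ^ α) :
    HasSum (fun k : ℕ ↦ a ^ k * (1 / s) ^ (α * k + β)) (s ^ (α - β) / (s ^ α - a)) := by
  have hsα : 0 < s ^ α := rpow_pos_of_pos hs α
  have hratio : |a / s ^ α| < 1 := by rwa [abs_div, abs_of_pos hsα, div_lt_one hsα]
  have hterm : ∀ k : ℕ, a ^ k * (1 / s) ^ (α * k + β) = s ^ (-β) * (a / s ^ α) ^ k := fun k ↦ by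
    rw [one_div, inv_rpow hs.le, ← rpow_neg hs.le, neg_add, rpow_add hs, ← neg_mul,
      rpow_mul hs.le, rpow_natCast, div_pow, rpow_neg hs.le, inv_pow, div_eq_mul_inv]
    ring
  have hsum : s ^ (-β) * (1 - a / s ^ α)⁻¹ = s ^ (α - β) / (s ^ α - a) := by
    rw [sub_eq_add_neg α β, rpow_add hs, one_sub_div hsα.ne', inv_div]
    ring
  simpa only [hterm, hsum] using (hasSum_geometric_of_abs_lt_one hratio).mul_left (s ^ (-β))

/-- Laplace transform of the Mittag-Leffler kernel:
`∫₀^∞ e^{-st} t^{β-1} E_{α,β}(a t^α) dt = s^{α-β}/(s^α - a)` for `s^α > |a|`. -/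
theorem laplace_mittagLeffler (α β a s : ℝ) (hα : 0 < α) (hβ : 0 < β)
    (hs : 0 < s) (hsa : |a| < s ^ α) :
    ∫ t in Set.Ioi (0 : ℝ), Real.exp (-s * t) * t ^ (β - 1) * mittagLefflerReal α β (a * t ^ α)
      = s ^ (α - β) / (s ^ α - a) := by
  have hp : ∀ k : ℕ, 0 < α * k + β := fun k ↦ by positivity
  have hkernel : ∀ k : ℕ,
      ∫ t in Ioi 0, t ^ (α * k + β - 1) * exp (-(s * t)) / Gamma (α * k + β) =
        (1 / s) ^ (α * k + β) := fun k ↦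
    integral_rpow_sub_one_mul_exp_neg_mul_div_Gamma (hp k) hs
  calc _ = ∫ t in Ioi 0, ∑' k : ℕ,
          a ^ k * (t ^ (α * k + β - 1) * exp (-(s * t)) / Gamma (α * k + β)) :=
        setIntegral_congr_fun measurableSet_Ioi fun t ht ↦
          exp_mul_rpow_mul_mittagLefflerReal_eq_tsum α β a s ht
    _ = ∑' k : ℕ, a ^ k * (1 / s) ^ (α * k + β) := by
      rw [integral_tsum_mul_of_nonneg]
      · simp only [hkernel]
      · refine fun k ↦ (ae_restrict_iff' measurableSet_Ioi).mpr <| .of_forall fun t ht ↦ ?_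
        have := Gamma_pos_of_pos (hp k)
        have : 0 < t := ht
        positivity
      · exact fun k ↦ (integrableOn_rpow_sub_one_mul_exp_neg_mul (hp k) hs).div_const _
      · simpa only [hkernel, abs_pow] using
          (hasSum_pow_mul_one_div_rpow (β := β) hs (by rwa [abs_abs])).summable
    _ = _ := (hasSum_pow_mul_one_div_rpow hs hsa).tsum_eq
end

section
/- Let α > 0, β > 0 be real and a ∈ ℝ. The function t ↦ t^{β-1} E_{α,β}(a t^α) is interchangeable with term-by-term Laplace transformation: for s > 0 with s^α > |a|, ∫₀^∞ e^{-st} t^{β-1} ∑_{k=0}^∞ (a t^α)^k/Γ(αk+β) dt = ∑_{k=0}^∞ a^k ∫₀^∞ e^{-st} t^{αk+β-1}/Γ(αk+β) dt = ∑_{k=0}^∞ a^k s^{-(αk+β)} = s^{α-β}/(s^α - a). -/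
/-!
The `k`-th term of the series is `aᵏ e^{-st} t^{αk+β-1} / Γ(αk+β)`, whose integral over `(0, ∞)`
is `aᵏ s^{-(αk+β)}` by Euler's Gamma integral. The integrals of the absolute values of the terms
form the geometric series `s^{-β} ∑ (|a| s^{-α})ᵏ`, convergent because `|a| < s^α`; this licenses
exchanging sum and integral, and summing the same geometric series with ratio `a s^{-α}` gives
`s^{α-β} / (s^α - a)`.
-/

open MeasureTheory Real Set

section LaplaceOfPower

variable {γ s : ℝ}

lemma integrableOn_exp_neg_mul_mul_rpow (hγ : 0 < γ) (hs : 0 < s) :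
    IntegrableOn (fun t : ℝ => exp (-s * t) * t ^ (γ - 1)) (Ioi 0) := by
  refine (integrableOn_rpow_mul_exp_neg_mul_rpow (p := 1) (s := γ - 1) (by linarith) one_pos
    hs).congr_fun (fun t _ => ?_) measurableSet_Ioi
  simp only [rpow_one, mul_comm]

lemma integral_exp_neg_mul_mul_rpow (hγ : 0 < γ) (hs : 0 < s) :
    ∫ t in Ioi (0 : ℝ), exp (-s * t) * t ^ (γ - 1) = Gamma γ * s ^ (-γ) := by
  calc ∫ t in Ioi (0 : ℝ), exp (-s * t) * t ^ (γ - 1)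
      = ∫ t in Ioi (0 : ℝ), t ^ (γ - 1) * exp (-(s * t)) := by
        simp only [neg_mul, mul_comm (exp _)]
    _ = (1 / s) ^ γ * Gamma γ := integral_rpow_mul_exp_neg_mul_Ioi hγ hs
    _ = Gamma γ * s ^ (-γ) := by
        rw [one_div, inv_rpow hs.le, rpow_neg hs.le, mul_comm]

lemma integral_exp_neg_mul_mul_rpow_div_Gamma (hγ : 0 < γ) (hs : 0 < s) :
    ∫ t in Ioi (0 : ℝ), exp (-s * t) * t ^ (γ - 1) / Gamma γ = s ^ (-γ) := by
  rw [integral_div, integral_exp_neg_mul_mul_rpow hγ hs,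
    mul_div_cancel_left₀ _ (Gamma_pos_of_pos hγ).ne']

lemma integral_norm_exp_neg_mul_mul_rpow_div_Gamma (hγ : 0 < γ) (hs : 0 < s) :
    ∫ t in Ioi (0 : ℝ), ‖exp (-s * t) * t ^ (γ - 1) / Gamma γ‖ = s ^ (-γ) := by
  rw [← integral_exp_neg_mul_mul_rpow_div_Gamma hγ hs]
  refine setIntegral_congr_fun measurableSet_Ioi fun t (ht : 0 < t) => norm_of_nonneg ?_
  have := Gamma_pos_of_pos hγ
  positivity

end LaplaceOfPower

lemma pow_mul_rpow_neg_mul_add {α β s : ℝ} (hs : 0 < s) (b : ℝ) (k : ℕ) :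
    b ^ k * s ^ (-(α * k + β)) = (b * s ^ (-α)) ^ k * s ^ (-β) := by
  rw [show -(α * k + β) = -α * k + -β by ring, rpow_add hs, rpow_mul hs.le, rpow_natCast,
    mul_pow]
  ring

lemma hasSum_pow_mul_rpow_neg_mul_add {α β a s : ℝ} (hs : 0 < s) (hsa : |a| < s ^ α) :
    HasSum (fun k : ℕ => a ^ k * s ^ (-(α * k + β))) (s ^ (α - β) / (s ^ α - a)) := by
  have hsα : 0 < s ^ α := rpow_pos_of_pos hs α
  have hratio : ‖a * s ^ (-α)‖ < 1 := by
    rwa [norm_mul, norm_of_nonneg (rpow_nonneg hs.le _), rpow_neg hs.le, norm_eq_abs,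
      ← div_eq_mul_inv, div_lt_one hsα]
  have hne : s ^ α - a ≠ 0 := by linarith [le_abs_self a]
  have hvalue : s ^ (α - β) / (s ^ α - a) = (1 - a * s ^ (-α))⁻¹ * s ^ (-β) := by
    rw [rpow_sub hs, rpow_neg hs.le, rpow_neg hs.le]
    field_simp
  simp only [pow_mul_rpow_neg_mul_add hs a, hvalue]
  exact (hasSum_geometric_of_norm_lt_one hratio).mul_right _

lemma exp_neg_mul_mul_rpow_mul_pow_div (α β a s : ℝ) (k : ℕ) {t : ℝ} (ht : 0 < t) (c : ℝ) :
    exp (-s * t) * t ^ (β - 1) * ((a * t ^ α) ^ k / c)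
      = a ^ k * (exp (-s * t) * t ^ (α * k + β - 1) / c) := by
  rw [mul_pow, ← rpow_natCast (t ^ α), ← rpow_mul ht.le,
    show α * k + β - 1 = β - 1 + α * k by ring, rpow_add ht]
  ring

/-- Term-by-term Laplace transformation of the Mittag-Leffler series: for `s^α > |a|`,
`∫₀^∞ e^{-st} t^{β-1} ∑ₖ (a t^α)^k/Γ(αk+β) dt = ∑ₖ aᵏ ∫₀^∞ e^{-st} t^{αk+β-1}/Γ(αk+β) dt
 = ∑ₖ aᵏ s^{-(αk+β)} = s^{α-β}/(s^α - a)`. -/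
theorem laplace_mittagLeffler_term_by_term (α β a s : ℝ) (hα : 0 < α) (hβ : 0 < β)
    (hs : 0 < s) (hsa : |a| < s ^ α) :
    (∫ t in Set.Ioi (0 : ℝ),
        Real.exp (-s * t) * t ^ (β - 1) * ∑' k : ℕ, (a * t ^ α) ^ k / Real.Gamma (α * k + β))
      = (∑' k : ℕ, a ^ k *
          ∫ t in Set.Ioi (0 : ℝ), Real.exp (-s * t) * t ^ (α * k + β - 1) / Real.Gamma (α * k + β))
    ∧ (∑' k : ℕ, a ^ k *
          ∫ t in Set.Ioi (0 : ℝ), Real.exp (-s * t) * t ^ (α * k + β - 1) / Real.Gamma (α * k + β))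
      = (∑' k : ℕ, a ^ k * s ^ (-(α * k + β)))
    ∧ (∑' k : ℕ, a ^ k * s ^ (-(α * k + β))) = s ^ (α - β) / (s ^ α - a) := by
  have hγ : ∀ k : ℕ, 0 < α * k + β := fun k => by positivity
  refine ⟨?_, tsum_congr fun k => by rw [integral_exp_neg_mul_mul_rpow_div_Gamma (hγ k) hs],
    (hasSum_pow_mul_rpow_neg_mul_add hs hsa).tsum_eq⟩
  have hint : ∀ k : ℕ, IntegrableOn (fun t => a ^ k *
      (exp (-s * t) * t ^ (α * k + β - 1) / Gamma (α * k + β))) (Ioi 0) := fun k =>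
    ((integrableOn_exp_neg_mul_mul_rpow (hγ k) hs).div_const _).const_mul _
  have hsum : Summable fun k : ℕ => ∫ t in Ioi (0 : ℝ),
      ‖a ^ k * (exp (-s * t) * t ^ (α * k + β - 1) / Gamma (α * k + β))‖ := by
    refine (hasSum_pow_mul_rpow_neg_mul_add (β := β) hs (by rwa [abs_abs])).summable.congr
      fun k => ?_
    simp_rw [norm_mul (a ^ k), integral_const_mul, norm_pow,
      integral_norm_exp_neg_mul_mul_rpow_div_Gamma (hγ k) hs, norm_eq_abs]
  calc _ = ∫ t in Ioi (0 : ℝ), ∑' k : ℕ,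
          a ^ k * (exp (-s * t) * t ^ (α * k + β - 1) / Gamma (α * k + β)) :=
        setIntegral_congr_fun measurableSet_Ioi fun t ht => by
          rw [← tsum_mul_left]
          exact tsum_congr fun k => exp_neg_mul_mul_rpow_mul_pow_div α β a s k ht _
    _ = ∑' k : ℕ, ∫ t in Ioi (0 : ℝ),
          a ^ k * (exp (-s * t) * t ^ (α * k + β - 1) / Gamma (α * k + β)) :=
        (integral_tsum_of_summable_integral_norm hint hsum).symm
    _ = _ := tsum_congr fun k => integral_const_mul _ _
end

section
/- For γ > 0, a ∈ ℝ and s > |a|^{1/γ}: ∫₀^∞ e^{-st} t^{γ-1} E_{γ,γ}(a t^γ) dt = 1/(s^γ - a). In particular, for γ = 1 this reduces to ∫₀^∞ e^{-st} e^{at} dt = 1/(s - a). -/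
open MeasureTheory Real

lemma myIntOn {p b : ℝ} (hp : -1 < p) (hb : 0 < b) :
    IntegrableOn (fun x : ℝ => x ^ p * Real.exp (-(b * x))) (Set.Ioi 0) := by
  have := integrableOn_rpow_mul_exp_neg_mul_rpow (p := 1) hp one_pos hb
  simpa [Real.rpow_one, neg_mul] using this

/-- For `γ > 0` and `s > |a|^{1/γ}`:
`∫₀^∞ e^{-st} t^{γ-1} E_{γ,γ}(a t^γ) dt = 1/(s^γ - a)`; in particular, for `γ = 1`
(and `s > |a|`), `∫₀^∞ e^{-st} e^{at} dt = 1/(s - a)`. -/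
theorem laplace_mittagLeffler_gamma_gamma (γ a s : ℝ) (hγ : 0 < γ)
    (hs : |a| ^ (1 / γ) < s) :
    (∫ t in Set.Ioi (0 : ℝ),
        Real.exp (-s * t) * t ^ (γ - 1) * mittagLefflerReal γ γ (a * t ^ γ))
      = 1 / (s ^ γ - a)
    ∧ (∀ s' : ℝ, |a| < s' →
        (∫ t in Set.Ioi (0 : ℝ), Real.exp (-s' * t) * Real.exp (a * t)) = 1 / (s' - a)) := by
  constructor
  · have ha0 : (0:ℝ) ≤ |a| := abs_nonneg a
    have hs0 : 0 < s := lt_of_le_of_lt (Real.rpow_nonneg ha0 _) hs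
    have hsγ : |a| < s ^ γ := by
      have h := Real.rpow_lt_rpow (Real.rpow_nonneg ha0 _) hs hγ
      rwa [← Real.rpow_mul ha0, one_div, inv_mul_cancel₀ hγ.ne', Real.rpow_one] at h
    have hsγ0 : 0 < s ^ γ := Real.rpow_pos_of_pos hs0 γ
    have hΓpos : ∀ k : ℕ, 0 < Real.Gamma (γ * k + γ) := fun k =>
      Real.Gamma_pos_of_pos (by positivity)
    have hexp : ∀ k : ℕ, (-1:ℝ) < γ * k + γ - 1 := by
      intro k
      have : (0:ℝ) < γ * k + γ := by positivity
      linarith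
    -- pointwise rewriting on Ioi 0, for arbitrary coefficient b
    have hpt : ∀ b : ℝ, ∀ k : ℕ, ∀ t ∈ Set.Ioi (0:ℝ),
        Real.exp (-s * t) * t ^ (γ - 1) * ((b * t ^ γ) ^ k / Real.Gamma (γ * k + γ))
          = (b ^ k / Real.Gamma (γ * k + γ)) *
          (t ^ (γ * k + γ - 1) * Real.exp (-(s * t))) := by
      intro b k t ht
      have ht0 : (0:ℝ) < t := ht
      have h1 : (t ^ γ) ^ k = t ^ (γ * k) := by
        rw [← Real.rpow_natCast (t ^ γ) k, ← Real.rpow_mul ht0.le]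
      simp only [mul_pow, h1]
      rw [show γ * k + γ - 1 = (γ - 1) + γ * k by ring, Real.rpow_add ht0]
      ring_nf
    -- value of each integral, for arbitrary coefficient b
    have hval : ∀ b : ℝ, ∀ k : ℕ,
        ∫ t in Set.Ioi (0:ℝ),
          Real.exp (-s * t) * t ^ (γ - 1) * ((b * t ^ γ) ^ k / Real.Gamma (γ * k + γ))
        = (1 / s ^ γ) * (b / s ^ γ) ^ k := by
      intro b k
      have hGint := integral_rpow_mul_exp_neg_mul_Ioi (a := γ * k + γ) (by positivity) hs0
      rw [setIntegral_congr_fun measurableSet_Ioi (hpt b k), integral_const_mul,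
        show γ * k + γ - 1 = (γ * k + γ) - 1 by ring, hGint]
      have hΓ := (hΓpos k).ne'
      have hinv : ((1:ℝ)/s) ^ γ = 1 / s ^ γ := by
        rw [one_div, one_div, ← Real.inv_rpow hs0.le]
      have h4 : ((1:ℝ)/s) ^ (γ * (k:ℝ)) = (1 / s ^ γ) ^ k := by
        rw [← Real.rpow_natCast ((1:ℝ)/s ^ γ) k, ← hinv, ← Real.rpow_mul (by positivity)]
      rw [Real.rpow_add (by positivity : (0:ℝ) < 1/s), hinv, h4,
        show b ^ k / Real.Gamma (γ * k + γ) *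
            ((1 / s ^ γ) ^ k * (1 / s ^ γ) * Real.Gamma (γ * k + γ))
          = (1 / s ^ γ) ^ k * (1 / s ^ γ) *
            (Real.Gamma (γ * k + γ) / Real.Gamma (γ * k + γ)) * b ^ k from by ring,
        div_self hΓ]
      ring
    -- the summand family
    set F : ℕ → ℝ → ℝ := fun k t =>
      Real.exp (-s * t) * t ^ (γ - 1) * ((a * t ^ γ) ^ k / Real.Gamma (γ * k + γ)) with hF
    have hint : ∀ k : ℕ, IntegrableOn (F k) (Set.Ioi 0) := by
      intro k
      have : IntegrableOn (fun t : ℝ => (a ^ k / Real.Gamma (γ * k + γ)) *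
          (t ^ (γ * k + γ - 1) * Real.exp (-(s * t)))) (Set.Ioi 0) := by
        apply Integrable.const_mul
        exact myIntOn (hexp k) hs0
      exact this.congr_fun (fun t ht => (hpt a k t ht).symm) measurableSet_Ioi
    -- norm integrals
    have hnorm : ∀ k : ℕ, ∫ t in Set.Ioi (0:ℝ), ‖F k t‖
        = (1 / s ^ γ) * (|a| / s ^ γ) ^ k := by
      intro k
      rw [← hval |a| k]
      apply setIntegral_congr_fun measurableSet_Ioi
      intro t ht
      have ht0 : (0:ℝ) < t := ht
      have hΓ := hΓpos k
      rw [hF]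
      simp only [Real.norm_eq_abs, abs_mul, abs_div, abs_of_pos hΓ,
        abs_of_pos (Real.exp_pos _), abs_of_nonneg (Real.rpow_nonneg ht0.le (γ - 1)),
        abs_pow, abs_mul, abs_of_nonneg (Real.rpow_nonneg ht0.le γ)]
    have hsum : Summable fun k : ℕ => ∫ t in Set.Ioi (0:ℝ), ‖F k t‖ := by
      simp only [hnorm]
      apply Summable.mul_left
      exact summable_geometric_of_lt_one (by positivity) ((div_lt_one hsγ0).2 hsγ)
    have hswap := integral_tsum_of_summable_integral_norm hint hsum
    have htsum : ∀ t : ℝ, (∑' k, F k t)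
        = Real.exp (-s * t) * t ^ (γ - 1) * mittagLefflerReal γ γ (a * t ^ γ) := by
      intro t
      rw [mittagLefflerReal, ← tsum_mul_left]
    calc (∫ t in Set.Ioi (0:ℝ),
          Real.exp (-s * t) * t ^ (γ - 1) * mittagLefflerReal γ γ (a * t ^ γ))
        = ∫ t in Set.Ioi (0:ℝ), ∑' k, F k t := by
          simp_rw [htsum]
      _ = ∑' k, ∫ t in Set.Ioi (0:ℝ), F k t := hswap.symm
      _ = ∑' k : ℕ, (1 / s ^ γ) * (a / s ^ γ) ^ k := by
          simp_rw [hF]; exact tsum_congr fun k => hval a k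
      _ = (1 / s ^ γ) * (1 - a / s ^ γ)⁻¹ := by
          rw [tsum_mul_left, tsum_geometric_of_abs_lt_one
            (by rw [abs_div, abs_of_pos hsγ0, div_lt_one hsγ0]; exact hsγ)]
      _ = 1 / (s ^ γ - a) := by
          have h1 : s ^ γ - a ≠ 0 := by
            have : a < s ^ γ := lt_of_le_of_lt (le_abs_self a) hsγ
            linarith [this]
          field_simp
  · intro s' h
    have hc : 0 < s' - a := by
      have := le_abs_self a; linarith
    have key := integral_rpow_mul_exp_neg_mul_Ioi (a := 1) one_pos hc
    simp only [sub_self, Real.rpow_zero, one_mul, Real.rpow_one, Real.Gamma_one,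
      mul_one] at key
    rw [← key]
    apply setIntegral_congr_fun measurableSet_Ioi
    intro t ht
    simp only [← Real.exp_add]
    ring_nf
end
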